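/- arXiv:2109.00284 — 4 statements merged into one kernel-verified Lean document; each statement's English description precedes it below -/
import Mathlib

section
/- Let β ∈ ℂ with Re(β) > 0, ε > 0, k ∈ ℕ, and R > exp^∘k(0) with M_{ε,k}(R) < Re(β). Let D ⊆ ℂ satisfy Re(ζ) ≥ R for all ζ ∈ D, and let f : D → D satisfy |f(ζ) − (ζ + β)| ≤ M_{ε,k}(Re(ζ)) for all ζ ∈ D. Then for every ζ ∈ D and every n ∈ ℕ: Re(f^∘n(ζ)) ≥ Re(ζ) + n·(Re(β) − M_{ε,k}(Re(ζ))) ≥ R + n·(Re(β) − M_{ε,k}(R)). -/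
open Filter Set

/-- `M_{ε,k}(x) = (∏_{j=0}^{k-1} log^∘j(x))⁻¹ · (log^∘k(x))^{-(1+ε)}`. -/
noncomputable def Mfun (ε : ℝ) (k : ℕ) (x : ℝ) : ℝ :=
  (∏ j ∈ Finset.range k, Real.log^[j] x)⁻¹ * (Real.log^[k] x) ^ (-(1 + ε))

lemma exp_iter_nonneg (m : ℕ) : 0 ≤ Real.exp^[m] 0 := by
  cases m with
  | zero => simp
  | succ m =>
    rw [Function.iterate_succ_apply']
    exact (Real.exp_pos _).le

lemma log_iter_gt {k : ℕ} {x : ℝ} (hx : Real.exp^[k] 0 < x) :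
    ∀ j, j ≤ k → Real.exp^[k - j] 0 < Real.log^[j] x := by
  intro j
  induction j with
  | zero => simpa using hx
  | succ j ih =>
    intro hjk
    have hj : j ≤ k := Nat.le_of_succ_le hjk
    have h1 := ih hj
    have hkj : k - j = (k - (j + 1)) + 1 := by omega
    rw [hkj, Function.iterate_succ_apply'] at h1
    have hpos : 0 < Real.log^[j] x := (Real.exp_pos _).trans h1
    rw [Function.iterate_succ_apply']
    exact (Real.lt_log_iff_exp_lt hpos).mpr h1

lemma log_iter_pos {k : ℕ} {x : ℝ} (hx : Real.exp^[k] 0 < x) :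
    ∀ j, j ≤ k → 0 < Real.log^[j] x := by
  intro j hj
  exact lt_of_le_of_lt (exp_iter_nonneg _) (log_iter_gt hx j hj)

lemma log_iter_mono {k : ℕ} {x y : ℝ} (hx : Real.exp^[k] 0 < x) (hxy : x ≤ y) :
    ∀ j, j ≤ k → Real.log^[j] x ≤ Real.log^[j] y := by
  intro j
  induction j with
  | zero => intro _; simpa using hxy
  | succ j ih =>
    intro hjk
    have hj : j ≤ k := Nat.le_of_succ_le hjk
    have hpos : 0 < Real.log^[j] x := log_iter_pos hx j hj
    rw [Function.iterate_succ_apply', Function.iterate_succ_apply']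
    exact Real.log_le_log hpos (ih hj)

lemma Mfun_pos {ε : ℝ} {k : ℕ} {x : ℝ} (hx : Real.exp^[k] 0 < x) :
    0 < Mfun ε k x := by
  unfold Mfun
  have h1 : 0 < ∏ j ∈ Finset.range k, Real.log^[j] x :=
    Finset.prod_pos fun j hj => log_iter_pos hx j (Finset.mem_range.mp hj).le
  have h2 : 0 < Real.log^[k] x := log_iter_pos hx k le_rfl
  positivity

lemma Mfun_anti {ε : ℝ} {k : ℕ} {x y : ℝ} (hε : 0 < ε)
    (hx : Real.exp^[k] 0 < x) (hxy : x ≤ y) :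
    Mfun ε k y ≤ Mfun ε k x := by
  unfold Mfun
  have hprodx : 0 < ∏ j ∈ Finset.range k, Real.log^[j] x :=
    Finset.prod_pos fun j hj => log_iter_pos hx j (Finset.mem_range.mp hj).le
  have hprodle : ∏ j ∈ Finset.range k, Real.log^[j] x ≤
      ∏ j ∈ Finset.range k, Real.log^[j] y :=
    Finset.prod_le_prod (fun j hj => (log_iter_pos hx j (Finset.mem_range.mp hj).le).le)
      (fun j hj => log_iter_mono hx hxy j (Finset.mem_range.mp hj).le)
  have hkx : 0 < Real.log^[k] x := log_iter_pos hx k le_rfl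
  have hky : Real.log^[k] x ≤ Real.log^[k] y := log_iter_mono hx hxy k le_rfl
  have h1 : (∏ j ∈ Finset.range k, Real.log^[j] y)⁻¹ ≤
      (∏ j ∈ Finset.range k, Real.log^[j] x)⁻¹ :=
    inv_anti₀ hprodx hprodle
  have h2 : (Real.log^[k] y) ^ (-(1 + ε)) ≤ (Real.log^[k] x) ^ (-(1 + ε)) := by
    rw [Real.rpow_neg (le_of_lt hkx), Real.rpow_neg (le_of_lt (lt_of_lt_of_le hkx hky))]
    exact inv_anti₀ (Real.rpow_pos_of_pos hkx _)
      (Real.rpow_le_rpow hkx.le hky (by linarith))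
  have h2pos : 0 ≤ (Real.log^[k] y) ^ (-(1 + ε)) :=
    (Real.rpow_pos_of_pos (lt_of_lt_of_le hkx hky) _).le
  exact mul_le_mul h1 h2 h2pos (inv_pos.mpr hprodx).le

theorem real_part_of_iterates_grows_linearly
    (β : ℂ) (hβ : 0 < β.re) (ε : ℝ) (hε : 0 < ε) (k : ℕ)
    (R : ℝ) (hR : Real.exp^[k] 0 < R) (hMR : Mfun ε k R < β.re)
    (D : Set ℂ) (hDre : ∀ ζ ∈ D, R ≤ ζ.re)
    (f : ℂ → ℂ) (hinv : Set.MapsTo f D D)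
    (hbound : ∀ ζ ∈ D, ‖f ζ - (ζ + β)‖ ≤ Mfun ε k ζ.re) :
    ∀ ζ ∈ D, ∀ n : ℕ,
      ζ.re + n * (β.re - Mfun ε k ζ.re) ≤ (f^[n] ζ).re ∧
      R + n * (β.re - Mfun ε k R) ≤ ζ.re + n * (β.re - Mfun ε k ζ.re) := by
  intro ζ hζ n
  have hRζ : R ≤ ζ.re := hDre ζ hζ
  have hMζ : Mfun ε k ζ.re ≤ Mfun ε k R := Mfun_anti hε hR hRζ
  have hstep : 0 < β.re - Mfun ε k ζ.re := by linarith
  have hmain : ∀ m : ℕ, ζ.re + m * (β.re - Mfun ε k ζ.re) ≤ (f^[m] ζ).re := by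
    intro m
    induction m with
    | zero => simp
    | succ m ih =>
      have hmem : f^[m] ζ ∈ D := hinv.iterate m hζ
      have hb := hbound _ hmem
      have hre : |(f (f^[m] ζ) - (f^[m] ζ + β)).re| ≤ Mfun ε k (f^[m] ζ).re :=
        le_trans (Complex.abs_re_le_norm _) hb
      have hre' : (f^[m] ζ).re + β.re - Mfun ε k (f^[m] ζ).re ≤ (f (f^[m] ζ)).re := by
        have := abs_le.mp hre
        simp only [Complex.sub_re, Complex.add_re] at this
        linarith [this.1]
      have hge : ζ.re ≤ (f^[m] ζ).re := by
        have : (0 : ℝ) ≤ m * (β.re - Mfun ε k ζ.re) :=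
          mul_nonneg (Nat.cast_nonneg m) hstep.le
        linarith
      have hζk : Real.exp^[k] 0 < ζ.re := lt_of_lt_of_le hR hRζ
      have hManti : Mfun ε k (f^[m] ζ).re ≤ Mfun ε k ζ.re := Mfun_anti hε hζk hge
      rw [Function.iterate_succ_apply']
      push_cast
      have : ζ.re + m * (β.re - Mfun ε k ζ.re) + (β.re - Mfun ε k ζ.re)
          ≤ (f^[m] ζ).re + β.re - Mfun ε k (f^[m] ζ).re := by linarith
      calc ζ.re + (m + 1) * (β.re - Mfun ε k ζ.re)
          = ζ.re + m * (β.re - Mfun ε k ζ.re) + (β.re - Mfun ε k ζ.re) := by ring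
        _ ≤ (f^[m] ζ).re + β.re - Mfun ε k (f^[m] ζ).re := this
        _ ≤ (f (f^[m] ζ)).re := hre'
  refine ⟨hmain n, ?_⟩
  have : (0 : ℝ) ≤ n := Nat.cast_nonneg n
  nlinarith [hMζ, hRζ]
end

section
/- Let β ∈ ℂ with Re(β) > 0, let ε > 0 and k ∈ ℕ, and let D be the union of a nonempty family of sets D_{h_l,h_u} associated with lower-upper pairs of type (β,ε,k). Let f : D → ℂ satisfy the uniform asymptotic bound: for every δ > 0 there exists R₀ > exp^∘k(0) such that for all ζ ∈ D with Re(ζ) ≥ R₀ the iterated principal logarithms L₁(ζ),…,L_k(ζ) are defined and |f(ζ) − ζ − β| ≤ δ · |ζ · L₁(ζ) ⋯ L_{k−1}(ζ) · L_k(ζ)^{1+ε}|^{−1} (for k = 0 read this bound as δ·|ζ|^{−(1+ε)}). Then there exists R > 0 such that for every ζ ∈ D with Re(ζ) ≥ R one has f(ζ) ∈ D and Re(f(ζ)) > Re(ζ); in particular the set D ∩ {ζ : Re(ζ) ≥ R} is f-invariant. -/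
open Filter Set

/-- `(t, hl, hu)` is a lower-upper pair of type `(β, ε, k)`. -/
def IsLUPair (β : ℂ) (ε : ℝ) (k : ℕ) (t : ℝ) (hl hu : ℝ → ℝ) : Prop :=
  Real.exp^[k] 0 < t ∧
  (∀ x, t ≤ x → 0 < β.re - Mfun ε k x) ∧
  (∀ x, t ≤ x → hl x < hu x) ∧
  (0 < β.im →
    (∀ x, t ≤ x → 0 < β.im - Mfun ε k x) ∧
    (AntitoneOn hl (Set.Ici t) ∨
      (MonotoneOn hl (Set.Ici t) ∧
        ∀ x, t ≤ x → hl (x + (β.re + Mfun ε k x)) - hl x ≤ β.im - Mfun ε k x)) ∧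
    MonotoneOn hu (Set.Ici t) ∧
    (∀ x, t ≤ x → β.im + Mfun ε k x ≤ hu (x + (β.re - Mfun ε k x)) - hu x)) ∧
  (β.im = 0 →
    AntitoneOn hl (Set.Ici t) ∧
    (∀ x, t ≤ x → hl (x + (β.re - Mfun ε k x)) - hl x ≤ -(Mfun ε k x)) ∧
    MonotoneOn hu (Set.Ici t) ∧
    (∀ x, t ≤ x → Mfun ε k x ≤ hu (x + (β.re - Mfun ε k x)) - hu x)) ∧
  (β.im < 0 →
    (∀ x, t ≤ x → 0 < -β.im - Mfun ε k x) ∧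
    AntitoneOn hl (Set.Ici t) ∧
    (∀ x, t ≤ x → hl (x + (β.re - Mfun ε k x)) - hl x ≤ β.im - Mfun ε k x) ∧
    (MonotoneOn hu (Set.Ici t) ∨
      (AntitoneOn hu (Set.Ici t) ∧
        ∀ x, t ≤ x → β.im + Mfun ε k x ≤ hu (x + (β.re + Mfun ε k x)) - hu x))) 

/-- The set `D_{h_l,h_u}` associated with a lower-upper pair. -/
def DSet (t : ℝ) (hl hu : ℝ → ℝ) : Set ℂ :=
  {ζ : ℂ | t ≤ ζ.re ∧ hl ζ.re < ζ.im ∧ ζ.im < hu ζ.re}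

/-!
With `δ = 1` the hypothesis gives `‖f ζ - ζ - β‖ ≤ M_{ε,k}(Re ζ)` for large `Re ζ`, because
`‖L_j(ζ)‖ ≥ log^∘j (Re ζ)`. So `f ζ` lies in the square of half-side `M = M_{ε,k}(Re ζ)` centred
at `ζ + β`. Its real part exceeds `Re ζ` since `ρ⁻ > 0`, and in each sign case of `Im β` the
monotonicity and step conditions of a lower-upper pair give `h_l(Re f ζ) ≤ h_l(Re ζ) + Im β - M`,
which keeps the square above the graph of `h_l`. The upper boundary is the lower one for the
conjugate pair `(conj β, -h_u, -h_l)`.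
-/

open Complex (conj_re conj_im)

lemma exp_iterate_zero_nonneg (n : ℕ) : 0 ≤ Real.exp^[n] 0 := by
  cases n with
  | zero => exact le_rfl
  | succ n => rw [Function.iterate_succ_apply']; exact (Real.exp_pos _).le

lemma exp_iterate_lt_log_iterate {x : ℝ} (j n : ℕ) (hx : Real.exp^[j + n] 0 < x) :
    Real.exp^[n] 0 < Real.log^[j] x := by
  induction j generalizing n with
  | zero => simpa using hx
  | succ j ih =>
    have h := ih (n + 1) (by rwa [← add_assoc, add_right_comm])
    rw [Function.iterate_succ_apply'] at h ⊢
    exact (Real.lt_log_iff_exp_lt ((Real.exp_pos _).trans h)).2 h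

lemma log_iterate_pos {x : ℝ} {j k : ℕ} (hj : j ≤ k) (hx : Real.exp^[k] 0 < x) :
    0 < Real.log^[j] x :=
  (exp_iterate_zero_nonneg _).trans_lt
    (exp_iterate_lt_log_iterate j (k - j) (by rwa [Nat.add_sub_cancel' hj]))

lemma log_iterate_re_le_norm_log_iterate {ζ : ℂ} {j k : ℕ} (hj : j ≤ k)
    (hζ : Real.exp^[k] 0 < ζ.re) : Real.log^[j] ζ.re ≤ ‖Complex.log^[j] ζ‖ := by
  induction j with
  | zero => exact Complex.re_le_norm ζ
  | succ j ih =>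
    rw [Function.iterate_succ_apply', Function.iterate_succ_apply']
    calc Real.log (Real.log^[j] ζ.re)
        ≤ Real.log ‖Complex.log^[j] ζ‖ :=
          Real.log_le_log (log_iterate_pos (by omega) hζ) (ih (by omega))
      _ = (Complex.log (Complex.log^[j] ζ)).re := (Complex.log_re _).symm
      _ ≤ ‖Complex.log (Complex.log^[j] ζ)‖ := Complex.re_le_norm _

lemma inv_prod_norm_log_iterate_le_Mfun {ε : ℝ} (hε : 0 ≤ 1 + ε) {k : ℕ} {ζ : ℂ}
    (hζ : Real.exp^[k] 0 < ζ.re) :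
    ((∏ m ∈ Finset.range k, ‖Complex.log^[m] ζ‖) * ‖Complex.log^[k] ζ‖ ^ (1 + ε))⁻¹ ≤
      Mfun ε k ζ.re := by
  have hpos : ∀ j ≤ k, 0 < Real.log^[j] ζ.re := fun j hj => log_iterate_pos hj hζ
  have hle : ∀ j ≤ k, Real.log^[j] ζ.re ≤ ‖Complex.log^[j] ζ‖ :=
    fun j hj => log_iterate_re_le_norm_log_iterate hj hζ
  have hpow : 0 < Real.log^[k] ζ.re ^ (1 + ε) := Real.rpow_pos_of_pos (hpos k le_rfl) _
  rw [Mfun, Real.rpow_neg (hpos k le_rfl).le, ← mul_inv]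
  refine inv_anti₀ (mul_pos (Finset.prod_pos fun j hj => hpos j (Finset.mem_range.1 hj).le) hpow)
    (mul_le_mul ?_ ?_ hpow.le (Finset.prod_nonneg fun _ _ => norm_nonneg _))
  · exact Finset.prod_le_prod (fun j hj => (hpos j (Finset.mem_range.1 hj).le).le)
      (fun j hj => hle j (Finset.mem_range.1 hj).le)
  · exact Real.rpow_le_rpow (hpos k le_rfl).le (hle k le_rfl) hε

namespace IsLUPair

variable {β : ℂ} {ε : ℝ} {k : ℕ} {t : ℝ} {hl hu : ℝ → ℝ}

lemma conj (h : IsLUPair β ε k t hl hu) :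
    IsLUPair (starRingEnd ℂ β) ε k t (fun x => -hu x) (fun x => -hl x) := by
  obtain ⟨ht, hρ, hlu, hpos, hzero, hneg⟩ := h
  simp only [IsLUPair, conj_re, conj_im]
  refine ⟨ht, hρ, fun x hx => neg_lt_neg (hlu x hx), fun him => ?_, fun him => ?_, fun him => ?_⟩
  · obtain ⟨hgap, hanti, hstep, hu'⟩ := hneg (by linarith)
    refine ⟨fun x hx => by linarith [hgap x hx], ?_, hanti.neg, fun x hx => by linarith [hstep x hx]⟩
    rcases hu' with hmono | ⟨hanti', hstep'⟩
    · exact Or.inl hmono.neg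
    · exact Or.inr ⟨hanti'.neg, fun x hx => by linarith [hstep' x hx]⟩
  · obtain ⟨hanti, hstep, hmono, hstep'⟩ := hzero (by linarith)
    exact ⟨hmono.neg, fun x hx => by linarith [hstep' x hx], hanti.neg,
      fun x hx => by linarith [hstep x hx]⟩
  · obtain ⟨hgap, hl', hmono, hstep⟩ := hpos (by linarith)
    refine ⟨fun x hx => by linarith [hgap x hx], hmono.neg, fun x hx => by linarith [hstep x hx], ?_⟩
    rcases hl' with hanti | ⟨hmono', hstep'⟩
    · exact Or.inl hanti.neg
    · exact Or.inr ⟨hmono'.neg, fun x hx => by linarith [hstep' x hx]⟩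

lemma lt_of_abs_sub_le (h : IsLUPair β ε k t hl hu) {x y : ℝ} (hx : t ≤ x)
    (hy : |y - (x + β.re)| ≤ Mfun ε k x) : x < y := by
  linarith [h.2.1 x hx, (abs_le.1 hy).1]

lemma hl_le_of_abs_sub_le (h : IsLUPair β ε k t hl hu) {x y : ℝ} (hx : t ≤ x)
    (hy : |y - (x + β.re)| ≤ Mfun ε k x) : hl y ≤ hl x + (β.im - Mfun ε k x) := by
  have hxy := h.lt_of_abs_sub_le hx hy
  obtain ⟨-, hρ, -, hpos, hzero, hneg⟩ := h
  obtain ⟨hy₁, hy₂⟩ := abs_le.1 hy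
  have hρ₀ := hρ x hx
  have hyt : y ∈ Ici t := hx.trans hxy.le
  have hlo : x + (β.re - Mfun ε k x) ∈ Ici t := by simp only [mem_Ici]; linarith
  have hhi : x + (β.re + Mfun ε k x) ∈ Ici t := by simp only [mem_Ici]; linarith
  rcases lt_trichotomy β.im 0 with him | him | him
  · obtain ⟨-, hanti, hstep, -⟩ := hneg him
    linarith [hanti hlo hyt (by linarith), hstep x hx]
  · obtain ⟨hanti, hstep, -, -⟩ := hzero him
    linarith [hanti hlo hyt (by linarith), hstep x hx]
  · obtain ⟨hgap, hanti | ⟨hmono, hstep⟩, -, -⟩ := hpos him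
    · linarith [hanti (mem_Ici.2 hx) hyt hxy.le, hgap x hx]
    · linarith [hmono hyt hhi (by linarith), hstep x hx]

lemma hl_re_lt_im_of_norm_sub_le (h : IsLUPair β ε k t hl hu) {ζ z : ℂ} (hζt : t ≤ ζ.re)
    (hζ : hl ζ.re < ζ.im) (hz : ‖z - ζ - β‖ ≤ Mfun ε k ζ.re) : hl z.re < z.im := by
  have hre : |z.re - (ζ.re + β.re)| ≤ Mfun ε k ζ.re := by
    simpa [sub_sub] using (Complex.abs_re_le_norm _).trans hz
  have him : |z.im - (ζ.im + β.im)| ≤ Mfun ε k ζ.re := by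
    simpa [sub_sub] using (Complex.abs_im_le_norm _).trans hz
  linarith [h.hl_le_of_abs_sub_le hζt hre, (abs_le.1 him).1]

lemma mem_DSet_of_norm_sub_le (h : IsLUPair β ε k t hl hu) {ζ z : ℂ} (hζ : ζ ∈ DSet t hl hu)
    (hz : ‖z - ζ - β‖ ≤ Mfun ε k ζ.re) : z ∈ DSet t hl hu ∧ ζ.re < z.re := by
  obtain ⟨hζt, hlζ, hζu⟩ := hζ
  have hre : ζ.re < z.re := h.lt_of_abs_sub_le hζt
    (by simpa [sub_sub] using (Complex.abs_re_le_norm _).trans hz)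
  have hupper := h.conj.hl_re_lt_im_of_norm_sub_le (ζ := starRingEnd ℂ ζ) (z := starRingEnd ℂ z)
    (by rwa [conj_re]) (by simpa using hζu) (by rwa [← map_sub, ← map_sub, Complex.norm_conj, conj_re])
  refine ⟨⟨hζt.trans hre.le, h.hl_re_lt_im_of_norm_sub_le hζt hlζ hz, ?_⟩, hre⟩
  simpa using hupper

end IsLUPair

theorem invariance_of_admissible_domains_general
    (β : ℂ) (ε : ℝ) (hε : 0 < ε) (k : ℕ)
    {I : Type} (t : I → ℝ) (hl hu : I → ℝ → ℝ)
    (hpair : ∀ i, IsLUPair β ε k (t i) (hl i) (hu i))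
    (D : Set ℂ) (hD : D = ⋃ i, DSet (t i) (hl i) (hu i))
    (f : ℂ → ℂ)
    (hbound : ∀ δ > (0 : ℝ), ∃ R₀ : ℝ, Real.exp^[k] 0 < R₀ ∧
      ∀ ζ ∈ D, R₀ ≤ ζ.re →
        ‖f ζ - ζ - β‖ ≤ δ *
          ((∏ m ∈ Finset.range k, ‖Complex.log^[m] ζ‖) *
            (‖Complex.log^[k] ζ‖) ^ (1 + ε))⁻¹) :
    ∃ R : ℝ, 0 < R ∧
      (∀ ζ ∈ D, R ≤ ζ.re → f ζ ∈ D ∧ ζ.re < (f ζ).re) ∧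
      Set.MapsTo f (D ∩ {ζ : ℂ | R ≤ ζ.re}) (D ∩ {ζ : ℂ | R ≤ ζ.re}) := by
  obtain ⟨R₀, hR₀, hb⟩ := hbound 1 one_pos
  have hforward : ∀ ζ ∈ D, R₀ ≤ ζ.re → f ζ ∈ D ∧ ζ.re < (f ζ).re := by
    intro ζ hζD hζR
    have hfζ : ‖f ζ - ζ - β‖ ≤ Mfun ε k ζ.re :=
      ((hb ζ hζD hζR).trans_eq (one_mul _)).trans
        (inv_prod_norm_log_iterate_le_Mfun (by linarith) (hR₀.trans_le hζR))
    subst hD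
    obtain ⟨i, hζi⟩ := mem_iUnion.1 hζD
    obtain ⟨hfi, hre⟩ := (hpair i).mem_DSet_of_norm_sub_le hζi hfζ
    exact ⟨mem_iUnion.2 ⟨i, hfi⟩, hre⟩
  refine ⟨R₀, (exp_iterate_zero_nonneg k).trans_lt hR₀, hforward, fun ζ ⟨hζD, hζR⟩ => ?_⟩
  obtain ⟨hfD, hre⟩ := hforward ζ hζD hζR
  exact ⟨hfD, hζR.trans hre.le⟩

theorem invariance_of_admissible_domains
    (β : ℂ) (hβ : 0 < β.re) (ε : ℝ) (hε : 0 < ε) (k : ℕ)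
    {I : Type} [Nonempty I] (t : I → ℝ) (hl hu : I → ℝ → ℝ)
    (hpair : ∀ i, IsLUPair β ε k (t i) (hl i) (hu i))
    (D : Set ℂ) (hD : D = ⋃ i, DSet (t i) (hl i) (hu i))
    (f : ℂ → ℂ)
    (hbound : ∀ δ > (0 : ℝ), ∃ R₀ : ℝ, Real.exp^[k] 0 < R₀ ∧
      ∀ ζ ∈ D, R₀ ≤ ζ.re →
        ‖f ζ - ζ - β‖ ≤ δ *
          ((∏ m ∈ Finset.range k, ‖Complex.log^[m] ζ‖) *
            (‖Complex.log^[k] ζ‖) ^ (1 + ε))⁻¹) :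
    ∃ R : ℝ, 0 < R ∧
      (∀ ζ ∈ D, R ≤ ζ.re → f ζ ∈ D ∧ ζ.re < (f ζ).re) ∧
      Set.MapsTo f (D ∩ {ζ : ℂ | R ≤ ζ.re}) (D ∩ {ζ : ℂ | R ≤ ζ.re}) :=
  invariance_of_admissible_domains_general β ε hε k t hl hu hpair D hD f hbound
end

section
/- Let β ∈ ℂ with Re(β) > 0 and Im(β) ≥ 0, let ε > 0, k ∈ ℕ, n ∈ ℕ with n ≥ 1, and t > exp^∘k(0) with M_{ε,k}(t) < Re(β). Let h : [t,∞) → ℝ be of class C^n, nondecreasing, with h^{(n)} nondecreasing on [t,∞), and suppose there exists ρ with 0 < ρ < Re(β) − M_{ε,k}(t) such that Σ_{i=1}^{n} (h^{(i)}(x)/i!)·ρ^i ≥ Im(β) + M_{ε,k}(x) for all x ≥ t. Then h(x + Re(β) − M_{ε,k}(x)) − h(x) ≥ Im(β) + M_{ε,k}(x) for all x ≥ t (i.e. h is an upper map of type (β,ε,k)). -/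
open Filter Set

/-! Since `h⁽ⁿ⁾` is nondecreasing, the Lagrange remainder of order `n - 1` on `[x, x + ρ]` is at
least the last Taylor term at `x`, so the Taylor polynomial of order `n` underestimates `h`:
`h (x + ρ) - h x ≥ ∑_{i=1}^n h⁽ⁱ⁾(x) ρⁱ / i! ≥ Im β + M_{ε,k}(x)`. As `M_{ε,k}` is nonincreasing,
`ρ < Re β - M_{ε,k}(t) ≤ Re β - M_{ε,k}(x)`, and monotonicity of `h` moves the increment from
`x + ρ` to `x + Re β - M_{ε,k}(x)`. -/

open Real

section IteratedLog

lemma monotone_iterate_exp_zero : Monotone fun m : ℕ => exp^[m] 0 :=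
  monotone_nat_of_le_succ fun m => by
    simpa only [Function.iterate_succ_apply'] using
      (add_one_le_exp _).trans' (le_add_of_nonneg_right zero_le_one)

lemma iterate_exp_zero_lt_iterate_log {j m : ℕ} {x : ℝ} (hx : exp^[j + m] 0 < x) :
    exp^[m] 0 < log^[j] x := by
  induction j generalizing m with
  | zero => simpa using hx
  | succ j ih =>
    have h := ih (m := m + 1) (by rwa [← add_assoc, add_right_comm])
    rw [Function.iterate_succ_apply'] at h ⊢
    exact (lt_log_iff_exp_lt ((exp_pos _).trans h)).2 h

lemma iterate_log_pos {j : ℕ} {x : ℝ} (hx : exp^[j] 0 < x) : 0 < log^[j] x := by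
  simpa using iterate_exp_zero_lt_iterate_log (m := 0) hx

lemma monotoneOn_iterate_log (j : ℕ) : MonotoneOn log^[j] (Ioi (exp^[j] 0)) := by
  induction j with
  | zero => simpa using monotoneOn_id
  | succ j ih =>
    intro x hx y hy hxy
    have hle : exp^[j] 0 ≤ exp^[j + 1] 0 := monotone_iterate_exp_zero j.le_succ
    have hx' : x ∈ Ioi (exp^[j] 0) := hle.trans_lt hx
    rw [Function.iterate_succ_apply', Function.iterate_succ_apply']
    exact log_le_log (iterate_log_pos hx') (ih hx' (hle.trans_lt hy) hxy)

lemma Mfun_antitoneOn {ε : ℝ} (hε : 0 ≤ 1 + ε) (k : ℕ) :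
    AntitoneOn (Mfun ε k) (Ioi (exp^[k] 0)) := by
  intro x hx y hy hxy
  have hpos : ∀ j ≤ k, 0 < log^[j] x := fun j hj =>
    iterate_log_pos ((monotone_iterate_exp_zero hj).trans_lt hx)
  have hmono : ∀ j ≤ k, log^[j] x ≤ log^[j] y := fun j hj =>
    monotoneOn_iterate_log j ((monotone_iterate_exp_zero hj).trans_lt hx)
      ((monotone_iterate_exp_zero hj).trans_lt hy) hxy
  have hprod : ∏ j ∈ Finset.range k, log^[j] x ≤ ∏ j ∈ Finset.range k, log^[j] y :=
    Finset.prod_le_prod (fun j hj => (hpos j (Finset.mem_range.1 hj).le).le)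
      fun j hj => hmono j (Finset.mem_range.1 hj).le
  have hprod_pos : 0 < ∏ j ∈ Finset.range k, log^[j] x :=
    Finset.prod_pos fun j hj => hpos j (Finset.mem_range.1 hj).le
  exact mul_le_mul (inv_anti₀ hprod_pos hprod)
    (rpow_le_rpow_of_nonpos (hpos k le_rfl) (hmono k le_rfl) (by linarith))
    (rpow_nonneg ((hpos k le_rfl).le.trans (hmono k le_rfl)) _) (inv_pos.2 hprod_pos).le

end IteratedLog

section Taylor

lemma iteratedDerivWithin_subset {𝕜 F : Type*} [NontriviallyNormedField 𝕜]
    [NormedAddCommGroup F] [NormedSpace 𝕜 F] {f : 𝕜 → F} {s t : Set 𝕜} {n : ℕ} {x : 𝕜} (hst : s ⊆ t)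
    (hs : UniqueDiffOn 𝕜 s) (ht : UniqueDiffOn 𝕜 t) (hf : ContDiffOn 𝕜 n f t) (hx : x ∈ s) :
    iteratedDerivWithin n f s x = iteratedDerivWithin n f t x := by
  simp only [iteratedDerivWithin_eq_iteratedFDerivWithin,
    iteratedFDerivWithin_subset hst hs ht hf hx]

lemma taylorWithinEval_subset {E : Type*} [NormedAddCommGroup E] [NormedSpace ℝ E]
    {f : ℝ → E} {s t : Set ℝ} {n : ℕ} {x₀ : ℝ} (hst : s ⊆ t) (hs : UniqueDiffOn ℝ s)
    (ht : UniqueDiffOn ℝ t) (hf : ContDiffOn ℝ n f t) (hx₀ : x₀ ∈ s) (x : ℝ) :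
    taylorWithinEval f n s x₀ x = taylorWithinEval f n t x₀ x := by
  simp only [taylor_within_apply]
  refine Finset.sum_congr rfl fun i hi => ?_
  have hin : (i : WithTop ℕ∞) ≤ n := by
    exact_mod_cast Nat.lt_succ_iff.1 (Finset.mem_range.1 hi)
  rw [iteratedDerivWithin_subset hst hs ht (hf.of_le hin) hx₀]

lemma taylorWithinEval_le_of_monotoneOn {f : ℝ → ℝ} {n : ℕ} {x y : ℝ} (hxy : x < y)
    (hf : ContDiffOn ℝ n f (Icc x y))
    (hmono : MonotoneOn (iteratedDerivWithin n f (Icc x y)) (Icc x y)) :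
    taylorWithinEval f n (Icc x y) x y ≤ f y := by
  have hx : x ∈ Icc x y := left_mem_Icc.2 hxy.le
  cases n with
  | zero => simpa using hmono hx (right_mem_Icc.2 hxy.le) hxy.le
  | succ m =>
    have hdiff : DifferentiableOn ℝ (iteratedDerivWithin m f (Icc x y)) (Ioo x y) :=
      (hf.differentiableOn_iteratedDerivWithin (by exact_mod_cast m.lt_succ_self)
        (uniqueDiffOn_Icc hxy)).mono Ioo_subset_Icc_self
    obtain ⟨ξ, hξ, hrem⟩ := taylor_mean_remainder_lagrange hxy.ne
      (by rw [uIcc_of_le hxy.le]; exact hf.of_succ)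
      (by rwa [uIcc_of_le hxy.le, uIoo_of_lt hxy])
    rw [uIcc_of_le hxy.le] at hrem
    rw [uIoo_of_lt hxy] at hξ
    have hD : iteratedDerivWithin (m + 1) f (Icc x y) x ≤
        iteratedDerivWithin (m + 1) f (Icc x y) ξ := hmono hx (Ioo_subset_Icc_self hξ) hξ.1.le
    have hpow : 0 ≤ (y - x) ^ (m + 1) := pow_nonneg (sub_nonneg.2 hxy.le) _
    rw [Nat.factorial_succ, Nat.cast_mul, Nat.cast_succ] at hrem
    rw [taylorWithinEval_succ, smul_eq_mul, ← sub_nonneg]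
    calc (0 : ℝ) ≤ (iteratedDerivWithin (m + 1) f (Icc x y) ξ -
          iteratedDerivWithin (m + 1) f (Icc x y) x) * (y - x) ^ (m + 1) /
            ((m + 1) * m.factorial) :=
          div_nonneg (mul_nonneg (sub_nonneg.2 hD) hpow) (by positivity)
      _ = _ := by rw [← sub_sub, hrem]; ring

lemma sum_iteratedDerivWithin_mul_pow_le_sub {f : ℝ → ℝ} {n : ℕ} {t x r : ℝ}
    (hf : ContDiffOn ℝ n f (Ici t))
    (hmono : MonotoneOn (iteratedDerivWithin n f (Ici t)) (Ici t)) (hx : t ≤ x) (hr : 0 < r) :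
    ∑ i ∈ Finset.Icc 1 n, iteratedDerivWithin i f (Ici t) x / i.factorial * r ^ i ≤
      f (x + r) - f x := by
  have hxr : x < x + r := lt_add_of_pos_right x hr
  have hsub : Icc x (x + r) ⊆ Ici t := fun z hz => hx.trans hz.1
  have hx' : x ∈ Icc x (x + r) := left_mem_Icc.2 hxr.le
  have hmono' : MonotoneOn (iteratedDerivWithin n f (Icc x (x + r))) (Icc x (x + r)) :=
    (hmono.mono hsub).congr fun z hz =>
      (iteratedDerivWithin_subset hsub (uniqueDiffOn_Icc hxr) (uniqueDiffOn_Ici t) hf hz).symm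
  have htaylor := taylorWithinEval_le_of_monotoneOn hxr (hf.mono hsub) hmono'
  rw [taylorWithinEval_subset hsub (uniqueDiffOn_Icc hxr) (uniqueDiffOn_Ici t) hf hx',
    taylor_within_apply, Finset.range_eq_Ico, Finset.sum_eq_sum_Ico_succ_bot n.succ_pos] at htaylor
  simp only [zero_add, Nat.succ_eq_add_one, Finset.Ico_add_one_right_eq_Icc, add_sub_cancel_left,
    smul_eq_mul, Nat.factorial_zero, Nat.cast_one, inv_one, pow_zero, one_mul,
    iteratedDerivWithin_zero] at htaylor
  rw [le_sub_iff_add_le']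
  convert htaylor using 3 with i
  ring

end Taylor

theorem upper_map_sufficient_condition_general
    (β : ℂ)
    (ε : ℝ) (hε : 0 < ε) (k : ℕ) (n : ℕ)
    (t : ℝ) (ht : Real.exp^[k] 0 < t)
    (h : ℝ → ℝ) (hC : ContDiffOn ℝ n h (Set.Ici t))
    (hmono : MonotoneOn h (Set.Ici t))
    (hdn : MonotoneOn (iteratedDerivWithin n h (Set.Ici t)) (Set.Ici t))
    (ρ : ℝ) (hρ0 : 0 < ρ) (hρ : ρ < β.re - Mfun ε k t)
    (hsum : ∀ x, t ≤ x →
      β.im + Mfun ε k x ≤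
        ∑ i ∈ Finset.Icc 1 n, (iteratedDerivWithin i h (Set.Ici t) x / (i.factorial : ℝ)) * ρ ^ i) :
    ∀ x, t ≤ x → β.im + Mfun ε k x ≤ h (x + (β.re - Mfun ε k x)) - h x := by
  intro x hx
  have hMx : Mfun ε k x ≤ Mfun ε k t := Mfun_antitoneOn (by linarith) k ht (ht.trans_le hx) hx
  have hρx : ρ ≤ β.re - Mfun ε k x := by linarith
  calc β.im + Mfun ε k x ≤ _ := hsum x hx
    _ ≤ h (x + ρ) - h x := sum_iteratedDerivWithin_mul_pow_le_sub hC hdn hx hρ0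
    _ ≤ h (x + (β.re - Mfun ε k x)) - h x := by
        gcongr
        exact hmono (by rw [mem_Ici]; linarith) (by rw [mem_Ici]; linarith) (by linarith)

theorem upper_map_sufficient_condition
    (β : ℂ) (hβre : 0 < β.re) (hβim : 0 ≤ β.im)
    (ε : ℝ) (hε : 0 < ε) (k : ℕ) (n : ℕ) (hn : 1 ≤ n)
    (t : ℝ) (ht : Real.exp^[k] 0 < t) (hMt : Mfun ε k t < β.re)
    (h : ℝ → ℝ) (hC : ContDiffOn ℝ n h (Set.Ici t))
    (hmono : MonotoneOn h (Set.Ici t))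
    (hdn : MonotoneOn (iteratedDerivWithin n h (Set.Ici t)) (Set.Ici t))
    (ρ : ℝ) (hρ0 : 0 < ρ) (hρ : ρ < β.re - Mfun ε k t)
    (hsum : ∀ x, t ≤ x →
      β.im + Mfun ε k x ≤
        ∑ i ∈ Finset.Icc 1 n, (iteratedDerivWithin i h (Set.Ici t) x / (i.factorial : ℝ)) * ρ ^ i) :
    ∀ x, t ≤ x → β.im + Mfun ε k x ≤ h (x + (β.re - Mfun ε k x)) - h x :=
  upper_map_sufficient_condition_general β ε hε k n t ht h hC hmono hdn ρ hρ0 hρ hsum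
end

section
/- For every C > 0 and every R > 0 there exists C₀ > 0 such that for every C' ≥ C₀ the standard quadratic domain R_{C'} is contained in R_C ∩ {z ∈ ℂ : Re(z) > R}. -/
open Filter Set

/-- The standard quadratic domain `R_C`, i.e. the image of the right half-plane
under `ζ ↦ ζ + C·(ζ+1)^{1/2}` (principal branch). -/
noncomputable def sqd (C : ℝ) : Set ℂ :=
  (fun ζ : ℂ => ζ + (C : ℂ) * (ζ + 1) ^ ((1 : ℂ) / 2)) '' {ζ : ℂ | 0 < ζ.re}

lemma sq_cpow_half (u : ℂ) : (u ^ ((1 : ℂ) / 2)) ^ 2 = u := by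
  rw [show (1 : ℂ) / 2 = ((2 : ℕ) : ℂ)⁻¹ by norm_num]
  exact Complex.cpow_nat_inv_pow u two_ne_zero

lemma re_cpow_half_nonneg (u : ℂ) : 0 ≤ (u ^ ((1 : ℂ) / 2)).re := by
  rcases eq_or_ne u 0 with h | h
  · simp [h, Complex.zero_cpow (show (1 : ℂ) / 2 ≠ 0 by norm_num)]
  · rw [Complex.cpow_def_of_ne_zero h, Complex.exp_re]
    refine mul_nonneg (Real.exp_nonneg _) ?_
    have him : (Complex.log u * ((1 : ℂ) / 2)).im = u.arg / 2 := by
      simp [Complex.mul_im, Complex.log_im]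
      ring
    rw [him]
    refine Real.cos_nonneg_of_mem_Icc ⟨?_, ?_⟩
    · have := Complex.neg_pi_lt_arg u
      linarith
    · have := Complex.arg_le_pi u
      linarith

lemma cpow_half_sq {w : ℂ} (hw : 0 < w.re) : (w ^ 2) ^ ((1 : ℂ) / 2) = w := by
  have h2 : ((w ^ 2) ^ ((1 : ℂ) / 2)) ^ 2 = w ^ 2 := sq_cpow_half _
  have hre := re_cpow_half_nonneg (w ^ 2)
  set r := (w ^ 2) ^ ((1 : ℂ) / 2) with hrdef
  have hmul : (r - w) * (r + w) = 0 := by linear_combination h2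
  rcases mul_eq_zero.mp hmul with h | h
  · exact sub_eq_zero.mp h
  · exfalso
    have hrw : r = -w := by linear_combination h
    rw [hrw] at hre
    simp at hre
    linarith

set_option maxHeartbeats 1000000 in
theorem standard_quadratic_domain_contained_in_germ
    (C : ℝ) (hC : 0 < C) (R : ℝ) (hR : 0 < R) :
    ∃ C₀ > 0, ∀ C' : ℝ, C₀ ≤ C' →
      sqd C' ⊆ sqd C ∩ {z : ℂ | R < z.re} := by
  refine ⟨C ^ 2 + 4 + R, by positivity, fun C' hC' z hzmem => ?_⟩
  simp only [sqd, Set.mem_image, Set.mem_setOf_eq] at hzmem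
  obtain ⟨ζ, hζ, hz⟩ := hzmem
  have hz' : ζ + (C' : ℂ) * ((ζ + 1) ^ ((1 : ℂ) / 2)) = z := hz
  clear hz
  set s : ℂ := (ζ + 1) ^ ((1 : ℂ) / 2) with hsdef
  have hs2 : s ^ 2 = ζ + 1 := sq_cpow_half _
  have hsre : 0 ≤ s.re := re_cpow_half_nonneg _
  -- components of s
  have hs2re : s.re ^ 2 - s.im ^ 2 = ζ.re + 1 := by
    have h := congrArg Complex.re hs2
    simp only [pow_two, Complex.mul_re, Complex.add_re, Complex.one_re] at h
    linear_combination h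
  have hs2im : 2 * (s.re * s.im) = ζ.im := by
    have h := congrArg Complex.im hs2
    simp only [pow_two, Complex.mul_im, Complex.add_im, Complex.one_im] at h
    linear_combination h
  have hy : 1 < s.re := by nlinarith [sq_nonneg s.im]
  have hsim : s.im ^ 2 < s.re ^ 2 := by nlinarith
  have hC'pos : (0 : ℝ) < C' := by nlinarith
  -- components of z
  have hzre : z.re = ζ.re + C' * s.re := by
    rw [← hz']
    simp only [Complex.add_re, Complex.re_ofReal_mul]
  have hzim : z.im = s.im * (2 * s.re + C') := by
    rw [← hz']
    simp only [Complex.add_im, Complex.im_ofReal_mul]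
    linear_combination -hs2im
  have hzrepos : C' * s.re < z.re := by
    rw [hzre]; nlinarith
  have hzregt : R < z.re := by nlinarith
  refine ⟨?_, hzregt⟩
  -- the square root construction
  set Q : ℂ := z + ((1 + C ^ 2 / 4 : ℝ) : ℂ) with hQdef
  have hQre : Q.re = z.re + (1 + C ^ 2 / 4) := by
    rw [hQdef]
    simp only [Complex.add_re, Complex.ofReal_re]
  have hQim : Q.im = z.im := by
    rw [hQdef]
    simp only [Complex.add_im, Complex.ofReal_im, add_zero]
  set r : ℂ := Q ^ ((1 : ℂ) / 2) with hrdef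
  have hr2 : r ^ 2 = Q := sq_cpow_half _
  have hrre : 0 ≤ r.re := re_cpow_half_nonneg _
  have hrQre : r.re ^ 2 - r.im ^ 2 = Q.re := by
    have h := congrArg Complex.re hr2
    simp only [pow_two, Complex.mul_re] at h
    linear_combination h
  have hrQim : 2 * (r.re * r.im) = Q.im := by
    have h := congrArg Complex.im hr2
    simp only [pow_two, Complex.mul_im] at h
    linear_combination h
  have hQrepos : 0 < Q.re := by rw [hQre]; nlinarith
  -- bound : r.re^2 ≤ Q.re + |Q.im|/2
  have hbound : r.re ^ 2 + r.im ^ 2 ≤ Q.re + |Q.im| := by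
    have hid : (r.re ^ 2 + r.im ^ 2) ^ 2 = Q.re ^ 2 + Q.im ^ 2 := by
      linear_combination (r.re ^ 2 - r.im ^ 2 + Q.re) * hrQre
        + (2 * (r.re * r.im) + Q.im) * hrQim
    have hsq : (r.re ^ 2 + r.im ^ 2) ^ 2 ≤ (Q.re + |Q.im|) ^ 2 := by
      rw [hid]
      nlinarith [sq_abs Q.im, abs_nonneg Q.im, mul_nonneg hQrepos.le (abs_nonneg Q.im)]
    exact le_of_pow_le_pow_left₀ two_ne_zero
      (by positivity) hsq
  have hrub : r.re ^ 2 ≤ Q.re + |Q.im| / 2 := by nlinarith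
  -- bound on |z.im|
  have habs : |z.im| ≤ s.re ^ 2 * (2 + C') := by
    rw [hzim, abs_mul]
    have h1 : |s.im| ≤ s.re := by
      nlinarith [abs_nonneg s.im, sq_abs s.im]
    have h2 : |2 * s.re + C'| = 2 * s.re + C' := abs_of_nonneg (by nlinarith)
    rw [h2]
    have h3 : |s.im| * (2 * s.re + C') ≤ s.re * (2 * s.re + C') :=
      mul_le_mul_of_nonneg_right h1 (by nlinarith)
    nlinarith [mul_nonneg hC'pos.le (mul_nonneg (by linarith : (0:ℝ) ≤ s.re)
      (by linarith : (0:ℝ) ≤ s.re - 1))]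
  -- key inequality : C * r.re < z.re + C^2/2
  have hkey : C * r.re < z.re + C ^ 2 / 2 := by
    have h1 : C ^ 2 * (4 + C') ≤ 2 * C' ^ 2 := by nlinarith
    have h2 : C ^ 2 * (1 + |z.im| / 2) < z.re ^ 2 := by
      nlinarith [mul_le_mul_of_nonneg_left habs (by positivity : (0:ℝ) ≤ C ^ 2 / 2),
        mul_le_mul_of_nonneg_left h1 (by positivity : (0:ℝ) ≤ s.re ^ 2 / 2),
        mul_self_lt_mul_self (by positivity : (0:ℝ) ≤ C' * s.re) hzrepos,
        mul_nonneg (sq_nonneg C) (by nlinarith : (0:ℝ) ≤ s.re ^ 2 - 1)]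
    have h3 : (C * r.re) ^ 2 < (z.re + C ^ 2 / 2) ^ 2 := by
      have h4 : r.re ^ 2 ≤ z.re + 1 + C ^ 2 / 4 + |z.im| / 2 := by
        rw [hQre, hQim] at hrub; linarith
      nlinarith [sq_nonneg C, abs_nonneg z.im]
    have h4 : 0 ≤ C * r.re := mul_nonneg hC.le hrre
    nlinarith
  -- lower bound on r.re
  have hrlb : C / 2 < r.re := by
    have h5 : C ^ 2 / 4 < r.re ^ 2 := by nlinarith
    nlinarith
  -- define w and ξ
  set w : ℂ := r - ((C / 2 : ℝ) : ℂ) with hwdef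
  have hwre : w.re = r.re - C / 2 := by
    rw [hwdef]
    simp only [Complex.sub_re, Complex.ofReal_re]
  have hwrepos : 0 < w.re := by rw [hwre]; linarith
  have hww : w ^ 2 + (C : ℂ) * w = z + 1 := by
    have hr2' := hr2
    rw [hQdef] at hr2'
    rw [hwdef]
    push_cast at hr2' ⊢
    linear_combination hr2'
  simp only [sqd, Set.mem_image, Set.mem_setOf_eq]
  refine ⟨w ^ 2 - 1, ?_, ?_⟩
  · -- 0 < (w^2 - 1).re
    have hw2re : (w ^ 2).re = z.re + 1 - C * w.re := by
      have h := congrArg Complex.re hww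
      simp only [Complex.add_re, Complex.re_ofReal_mul, Complex.one_re] at h
      linarith
    simp only [Complex.sub_re, Complex.one_re, hw2re, hwre]
    linarith
  · -- w^2 - 1 + C * ((w^2 - 1) + 1)^(1/2) = z
    rw [show w ^ 2 - 1 + 1 = w ^ 2 by ring, cpow_half_sq hwrepos]
    linear_combination hww
end
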